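/- The Fischer graph of the n-Dyck shift D_n (n > 1) does not contain an eventually geodesic strictly proximal pair of bi-infinite paths. -/

import Mathlib

namespace Paper

variable {A B C : Type*}

def shiftMap (x : ℤ → A) : ℤ → A := fun i => x (i + 1)

def shiftInvMap (x : ℤ → A) : ℤ → A := fun i => x (i - 1)

/-- A subshift: nonempty, shift-invariant (both directions), and closed
(expressed combinatorially: any configuration all of whose central patterns
are approximated by members is a member). -/
def IsSubshift (X : Set (ℤ → A)) : Prop :=
  X.Nonempty ∧ (∀ x ∈ X, shiftMap x ∈ X) ∧ (∀ x ∈ X, shiftInvMap x ∈ X) ∧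
  ∀ x : ℤ → A, (∀ n : ℕ, ∃ y ∈ X, ∀ i : ℤ, |i| ≤ (n : ℤ) → y i = x i) → x ∈ X

/-- The word `x[i, i+k-1]`. -/
def cfgWord (x : ℤ → A) (i : ℤ) (k : ℕ) : List A :=
  List.ofFn (fun t : Fin k => x (i + ((t : ℕ) : ℤ)))

/-- The language of a set of configurations. -/
def lang (X : Set (ℤ → A)) : Set (List A) := {w | ∃ x ∈ X, ∃ i : ℤ, cfgWord x i w.length = w}

def TransitiveShift (X : Set (ℤ → A)) : Prop :=
  ∀ u ∈ lang X, ∀ v ∈ lang X, ∃ w : List A, u ++ w ++ v ∈ lang X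

/-- Left ray of a configuration: `leftRay x n = x (-1-n)`. -/
def leftRay (x : ℤ → A) : ℕ → A := fun n => x (-1 - (n : ℤ))

def rightRay (x : ℤ → A) : ℕ → A := fun n => x (n : ℤ)

def LeftRays (X : Set (ℤ → A)) : Set (ℕ → A) := leftRay '' X

def RightRays (X : Set (ℤ → A)) : Set (ℕ → A) := rightRay '' X

/-- Glue a left ray and a right ray into a configuration. -/
def glue (l r : ℕ → A) : ℤ → A := fun i => if 0 ≤ i then r i.toNat else l (-1 - i).toNat

/-- Follower set of a left-infinite sequence. -/
def foll (X : Set (ℤ → A)) (l : ℕ → A) : Set (ℕ → A) := {r | glue l r ∈ X}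

def wordThen (w : List A) (r : ℕ → A) : ℕ → A :=
  fun n => if h : n < w.length then w.get ⟨n, h⟩ else r (n - w.length)

/-- Follower set of a word. -/
def follW (X : Set (ℤ → A)) (w : List A) : Set (ℕ → A) := {r | wordThen w r ∈ RightRays X}

def occursInLeft (l : ℕ → A) (w : List A) : Prop :=
  ∃ j : ℕ, ∀ k : Fin w.length, l (j + (w.length - 1 - (k : ℕ))) = w.get k

/-- The language of a left-infinite sequence. -/
def langL (l : ℕ → A) : Set (List A) := {w | occursInLeft l w}

/-- The left ray `l` ends with the word `w`. -/
def raySuffix (l : ℕ → A) (w : List A) : Prop :=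
  ∀ k : Fin w.length, l (w.length - 1 - (k : ℕ)) = w.get k

def HalfSyncWord (X : Set (ℤ → A)) (w : List A) : Prop :=
  w ∈ lang X ∧ ∃ l ∈ LeftRays X, raySuffix l w ∧ langL l = lang X ∧ foll X l = follW X w

def HalfSynchronized (X : Set (ℤ → A)) : Prop := TransitiveShift X ∧ ∃ w, HalfSyncWord X w

def SyncWord (X : Set (ℤ → A)) (w : List A) : Prop :=
  w ∈ lang X ∧ ∀ l ∈ LeftRays X, raySuffix l w → foll X l = follW X w

def Synchronized (X : Set (ℤ → A)) : Prop := TransitiveShift X ∧ ∃ w, SyncWord X w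

/-- Product of two subshifts, over the product alphabet. -/
def prodShift (Y : Set (ℤ → B)) (Z : Set (ℤ → C)) : Set (ℤ → B × C) :=
  {x | (fun i => (x i).1) ∈ Y ∧ (fun i => (x i).2) ∈ Z}

/-- Identification of a pair of sets of right rays with a set of right rays
over the product alphabet. -/
def prodRaySet (S : Set (ℕ → B)) (T : Set (ℕ → C)) : Set (ℕ → B × C) :=
  {r | (fun n => (r n).1) ∈ S ∧ (fun n => (r n).2) ∈ T}

/-- Extend a left ray by one more symbol on the right. -/
def extendRay (l : ℕ → A) (a : A) : ℕ → A := fun n => if n = 0 then a else l (n - 1)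

/-- Edge of the Krieger graph from `u` to `v` labeled `a`. -/
def KEdge (X : Set (ℤ → A)) (u : Set (ℕ → A)) (a : A) (v : Set (ℕ → A)) : Prop :=
  ∃ l ∈ LeftRays X, extendRay l a ∈ LeftRays X ∧ u = foll X l ∧ v = foll X (extendRay l a)

def KStep (X : Set (ℤ → A)) (u v : Set (ℕ → A)) : Prop := ∃ a, KEdge X u a v

/-- Existence of a finite path in the Krieger graph. -/
def KReach (X : Set (ℤ → A)) : Set (ℕ → A) → Set (ℕ → A) → Prop :=
  Relation.ReflTransGen (KStep X)

def KVertex (X : Set (ℤ → A)) (v : Set (ℕ → A)) : Prop := ∃ l ∈ LeftRays X, v = foll X l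

/-- A subshift is sofic iff it has finitely many follower sets. -/
def Sofic (X : Set (ℤ → A)) : Prop := {v : Set (ℕ → A) | KVertex X v}.Finite

/-- Vertex of the Fischer graph (w.r.t. half-synchronizing word `w`): a vertex of the
Krieger graph in the maximal strongly connected subgraph containing `foll w`. -/
def FVertex (X : Set (ℤ → A)) (w : List A) (v : Set (ℕ → A)) : Prop :=
  KVertex X v ∧ KReach X (follW X w) v ∧ KReach X v (follW X w)

/-- Directed (multi)graph with vertex type `V` and edge type `E`. -/
structure DiGraph (V : Type*) (E : Type*) where
  ini : E → V
  ter : E → V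

variable {V E V' E' : Type*}

/-- Bi-infinite path on a graph. -/
def BiPath (G : DiGraph V E) (x : ℤ → E) : Prop := ∀ i : ℤ, G.ter (x i) = G.ini (x (i + 1))

/-- `p` is a finite path of `m+1` edges. -/
def FinPath (G : DiGraph V E) (m : ℕ) (p : Fin (m + 1) → E) : Prop :=
  ∀ k : Fin m, G.ter (p k.castSucc) = G.ini (p k.succ)

/-- The subpath `x[i, i+n]` of a bi-infinite path is a shortest path between its endpoints. -/
def GeodesicSeg (G : DiGraph V E) (x : ℤ → E) (i : ℤ) (n : ℕ) : Prop :=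
  ∀ (m : ℕ) (p : Fin (m + 1) → E), FinPath G m p →
    G.ini (p 0) = G.ini (x i) → G.ter (p (Fin.last m)) = G.ter (x (i + (n : ℤ))) → n ≤ m

def EvGeodesic (G : DiGraph V E) (x : ℤ → E) : Prop :=
  ∃ i₀ : ℤ, ∀ i : ℤ, i₀ ≤ i → ∀ n : ℕ, GeodesicSeg G x i n

/-- Strictly proximal pair of bi-infinite paths. -/
def StrictProxPair (x y : ℤ → E) : Prop :=
  (∀ n : ℕ, ∃ i : ℕ, ∀ k : ℕ, k ≤ n → x ((i : ℤ) + (k : ℤ)) = y ((i : ℤ) + (k : ℤ))) ∧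
  ∀ N : ℕ, ∃ i : ℕ, N ≤ i ∧ x ((i : ℕ) : ℤ) ≠ y ((i : ℕ) : ℤ)

def HasEvGeoProxPair (G : DiGraph V E) : Prop :=
  ∃ x y : ℤ → E, BiPath G x ∧ BiPath G y ∧ EvGeodesic G x ∧ EvGeodesic G y ∧ StrictProxPair x y

/-- Edges of the Fischer graph: Krieger edges between Fischer vertices. -/
def FischerE (X : Set (ℤ → A)) (w : List A) : Type _ :=
  {t : Set (ℕ → A) × A × Set (ℕ → A) //
    FVertex X w t.1 ∧ FVertex X w t.2.2 ∧ KEdge X t.1 t.2.1 t.2.2}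

def FischerGraph (X : Set (ℤ → A)) (w : List A) : DiGraph (Set (ℕ → A)) (FischerE X w) :=
  ⟨fun e => e.1.1, fun e => e.1.2.2⟩

def SlidingBlockCode (X : Set (ℤ → A)) (F : (ℤ → A) → (ℤ → B)) : Prop :=
  ∃ (r : ℕ) (f : (Fin (2 * r + 1) → A) → B),
    ∀ x ∈ X, ∀ i : ℤ, F x i = f (fun k => x (i + ((k : ℕ) : ℤ) - (r : ℤ)))

def ShiftConjugate (X : Set (ℤ → A)) (Y : Set (ℤ → B)) : Prop :=
  ∃ F : (ℤ → A) → (ℤ → B), SlidingBlockCode X F ∧ Set.InjOn F X ∧ F '' X = Y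

def DirectPrime (X : Set (ℤ → A)) : Prop :=
  ∀ (B C : Type) (_ : Finite B) (_ : Finite C) (Y : Set (ℤ → B)) (Z : Set (ℤ → C)),
    IsSubshift Y → IsSubshift Z → ShiftConjugate X (prodShift Y Z) →
    (∃ y, Y = {y}) ∨ (∃ z, Z = {z})

/-- Words over the bracket alphabet that reduce to the identity of the Dyck monoid. -/
inductive ReducesToOne {n : ℕ} : List (Fin n ⊕ Fin n) → Prop
  | nil : ReducesToOne []
  | wrap (i : Fin n) (w : List (Fin n ⊕ Fin n)) :
      ReducesToOne w → ReducesToOne (Sum.inl i :: (w ++ [Sum.inr i]))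
  | append (u v : List (Fin n ⊕ Fin n)) :
      ReducesToOne u → ReducesToOne v → ReducesToOne (u ++ v)

/-- A word is zero in the Dyck monoid iff it contains a mismatched pair of brackets. -/
def Mismatch {n : ℕ} (w : List (Fin n ⊕ Fin n)) : Prop :=
  ∃ (u m v : List (Fin n ⊕ Fin n)) (i j : Fin n), i ≠ j ∧ ReducesToOne m ∧
    w = u ++ Sum.inl i :: (m ++ Sum.inr j :: v)

/-- The `n`-Dyck shift: left brackets `Sum.inl i`, right brackets `Sum.inr i`. -/
def Dyck (n : ℕ) : Set (ℤ → Fin n ⊕ Fin n) :=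
  {x | ∀ (i : ℤ) (k : ℕ), ¬ Mismatch (cfgWord x i k)}

/-!
A left ray of the Dyck shift determines, through a stack automaton, the stack of its unmatched
left brackets, and its follower set depends only on these stacks. Hence a `β_j`-edge of the
Fischer graph is a self-loop or the reverse of an `α_j`-edge, and an `α`-edge is determined by
its terminal vertex. On an eventually geodesic path no vertex repeats, so from some time on only
`α`-edges occur: a run of `β`-edges would shrink the finite stack of a Fischer vertex forever,
and a `β`-edge right after an `α`-edge would go back to where that edge started. Two such paths
that agree at one late time then agree at every earlier late time, which strict proximality
forbids.
-/

section Rays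

def rightWord (r : ℕ → A) (k : ℕ) : List A := List.ofFn fun t : Fin k => r t

/-- For `l = leftRay x` this is the word `x[-Q, -1]`. -/
def leftWord (l : ℕ → A) (Q : ℕ) : List A := (rightWord l Q).reverse

@[simp] lemma rightWord_zero (r : ℕ → A) : rightWord r 0 = [] := rfl

@[simp] lemma leftWord_zero (l : ℕ → A) : leftWord l 0 = [] := rfl

@[simp] lemma length_rightWord (r : ℕ → A) (k : ℕ) : (rightWord r k).length = k := by
  simp [rightWord]

@[simp] lemma length_cfgWord (x : ℤ → A) (i : ℤ) (k : ℕ) : (cfgWord x i k).length = k := by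
  simp [cfgWord]

@[simp] lemma length_leftWord (l : ℕ → A) (Q : ℕ) : (leftWord l Q).length = Q := by
  simp [leftWord]

lemma rightWord_extendRay_succ (r : ℕ → A) (a : A) (k : ℕ) :
    rightWord (extendRay r a) (k + 1) = a :: rightWord r k := by
  simp [rightWord, List.ofFn_succ, extendRay]

lemma rightWord_add (r : ℕ → A) (m k : ℕ) :
    rightWord r (m + k) = rightWord r m ++ rightWord (fun i => r (i + m)) k := by
  simp only [rightWord, List.ofFn_add]
  congr 2 with t
  simp [Nat.add_comm]

lemma leftWord_add (l : ℕ → A) (Q m : ℕ) :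
    leftWord l (Q + m) = leftWord (fun i => l (i + m)) Q ++ leftWord l m := by
  simp [leftWord, Nat.add_comm Q m, rightWord_add]

lemma leftWord_extendRay_succ (l : ℕ → A) (a : A) (Q : ℕ) :
    leftWord (extendRay l a) (Q + 1) = leftWord l Q ++ [a] := by
  simp [leftWord, rightWord_extendRay_succ]

lemma leftWord_suffix (l : ℕ → A) (Q m : ℕ) : leftWord l Q <:+ leftWord l (m + Q) :=
  ⟨_, (leftWord_add l m Q).symm⟩

lemma rightWord_prefix (r : ℕ → A) (k m : ℕ) : rightWord r k <+: rightWord r (k + m) :=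
  ⟨_, (rightWord_add r k m).symm⟩

lemma cfgWord_add (x : ℤ → A) (i : ℤ) (k₁ k₂ : ℕ) :
    cfgWord x i (k₁ + k₂) = cfgWord x i k₁ ++ cfgWord x (i + k₁) k₂ := by
  simp only [cfgWord, List.ofFn_add]
  congr 2 with t
  simp [add_assoc]

lemma cfgWord_infix (x : ℤ → A) {i j : ℤ} {k m : ℕ} (hji : j ≤ i) (hk : i + k ≤ j + m) :
    cfgWord x i k <:+: cfgWord x j m := by
  obtain ⟨a, rfl⟩ : ∃ a : ℕ, i = j + a := ⟨(i - j).toNat, by omega⟩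
  obtain ⟨b, rfl⟩ : ∃ b : ℕ, m = a + (k + b) := ⟨(j + m - (j + a + k)).toNat, by omega⟩
  refine ⟨cfgWord x j a, cfgWord x (j + a + k) b, ?_⟩
  simp only [cfgWord_add, List.append_assoc, add_assoc]

lemma rightWord_rightRay (x : ℤ → A) (k : ℕ) : rightWord (rightRay x) k = cfgWord x 0 k := by
  simp [rightWord, rightRay, cfgWord]

lemma cfgWord_glue (l r : ℕ → A) (Q k : ℕ) :
    cfgWord (glue l r) (-Q) (Q + k) = leftWord l Q ++ rightWord r k := by
  rw [cfgWord_add, neg_add_cancel]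
  congr 1
  · refine List.ext_getElem (by simp) fun t h _ => ?_
    simp only [cfgWord, leftWord, rightWord, List.getElem_ofFn, List.getElem_reverse,
      List.length_ofFn] at h ⊢
    rw [glue, if_neg (by omega)]
    congr
    omega
  · refine List.ext_getElem (by simp) fun t h _ => ?_
    simp [cfgWord, rightWord, glue]

lemma leftRay_glue (l r : ℕ → A) : leftRay (glue l r) = l := by
  funext m
  simp only [leftRay, glue]
  rw [if_neg (by omega)]
  congr
  omega

lemma rightRay_glue (l r : ℕ → A) : rightRay (glue l r) = r := by
  funext m
  simp [rightRay, glue]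

lemma glue_leftRay_rightRay (x : ℤ → A) : glue (leftRay x) (rightRay x) = x := by
  funext i
  by_cases hi : 0 ≤ i
  · simp [glue, rightRay, hi]
  · simp only [glue, leftRay, if_neg hi]
    congr
    omega

lemma mem_leftRays_iff {X : Set (ℤ → A)} {l : ℕ → A} : l ∈ LeftRays X ↔ (foll X l).Nonempty := by
  constructor
  · rintro ⟨x, hx, rfl⟩
    exact ⟨rightRay x, show glue _ _ ∈ X by rwa [glue_leftRay_rightRay]⟩
  · rintro ⟨r, hr⟩
    exact ⟨glue l r, hr, leftRay_glue l r⟩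

lemma follW_nil {X : Set (ℤ → A)} : follW X [] = RightRays X := by
  ext r
  have : wordThen ([] : List A) r = r := funext fun m => by simp [wordThen]
  change wordThen [] r ∈ RightRays X ↔ r ∈ RightRays X
  rw [this]

end Rays

section Paths

variable {G : DiGraph V E}

lemma EvGeodesic.exists_ini_injective {x : ℤ → E} (hx : EvGeodesic G x) :
    ∃ i₀, ∀ i j, i₀ ≤ i → i < j → G.ini (x i) ≠ G.ini (x j) := by
  obtain ⟨i₀, hgeo⟩ := hx
  refine ⟨i₀, fun i j hi hij heq => ?_⟩
  have hter : G.ter (x j) = G.ter (x (i + ((j - i).toNat : ℕ))) := by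
    congr 2
    omega
  have := hgeo i hi (j - i).toNat 0 (fun _ => x j) (fun k => k.elim0) heq.symm hter
  omega

/-- Edges on which `G.ter` is injective are determined by the next edge of a path, so two such
paths that agree somewhere agree at all earlier times. -/
lemma not_strictProxPair_of_injOn_ter {S : Set E} (hS : S.InjOn G.ter) {x y : ℤ → E}
    (hx : BiPath G x) (hy : BiPath G y) {T : ℤ} (hxS : ∀ t, T ≤ t → x t ∈ S)
    (hyS : ∀ t, T ≤ t → y t ∈ S) : ¬StrictProxPair x y := by
  rintro ⟨hagree, hdiffer⟩
  have hback : ∀ (d : ℕ) (t : ℤ), T ≤ t → x (t + d) = y (t + d) → x t = y t := by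
    intro d
    induction d with
    | zero => simp
    | succ d ih =>
      intro t ht h
      have hsucc : x (t + 1) = y (t + 1) :=
        ih (t + 1) (by omega) (by rwa [add_assoc, add_comm 1, ← Nat.cast_succ])
      exact hS (hxS t ht) (hyS t ht) (by rw [hx t, hy t, hsucc])
  obtain ⟨i, hTi, hne⟩ := hdiffer T.toNat
  obtain ⟨i', hi'⟩ := hagree i
  rcases le_or_gt i' i with hle | hlt
  · refine hne ?_
    simpa [Nat.cast_sub hle] using hi' (i - i') (by omega)
  · refine hne (hback (i' - i) i (by omega) ?_)
    simpa [Nat.cast_sub hlt.le] using hi' 0 (Nat.zero_le _)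

end Paths

namespace Dyck

variable {n : ℕ}

/-- One step of a stack automaton for `Dyck n`. A right bracket read on the empty stack is
skipped: inside a word it may still be matched by a left bracket further to the left. -/
def step : List (Fin n) → Fin n ⊕ Fin n → Option (List (Fin n))
  | s, .inl i => some (i :: s)
  | [], .inr _ => some []
  | j :: s, .inr i => if i = j then some s else none

def run (s : List (Fin n)) (w : List (Fin n ⊕ Fin n)) : Option (List (Fin n)) :=
  w.foldlM step s

@[simp] lemma run_nil (s : List (Fin n)) : run s [] = some s := rfl

@[simp] lemma run_cons (s : List (Fin n)) (a : Fin n ⊕ Fin n) (w : List (Fin n ⊕ Fin n)) :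
    run s (a :: w) = (step s a).bind (run · w) := rfl

lemma run_append (s : List (Fin n)) (u v : List (Fin n ⊕ Fin n)) :
    run s (u ++ v) = (run s u).bind (run · v) := by
  simp [run, List.foldlM_append]

@[simp] lemma step_inl (s : List (Fin n)) (i : Fin n) : step s (.inl i) = some (i :: s) := rfl

@[simp] lemma step_inr_nil (i : Fin n) : step [] (.inr i) = some [] := rfl

@[simp] lemma step_inr_cons (s : List (Fin n)) (i j : Fin n) :
    step (j :: s) (.inr i) = if i = j then some s else none := rfl

lemma run_of_reducesToOne {w : List (Fin n ⊕ Fin n)} (h : ReducesToOne w) (s : List (Fin n)) :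
    run s w = some s := by
  induction h generalizing s with
  | nil => rfl
  | wrap i w _ ih => simp [run_append, ih]
  | append u v _ _ ihu ihv => simp [run_append, ihu, ihv]

lemma run_replicate_inr (i : Fin n) (k : ℕ) : run [] (List.replicate k (.inr i)) = some [] := by
  induction k with
  | zero => rfl
  | succ k ih => simpa [List.replicate_succ] using ih

lemma run_ne_none_of_append_stack {σ b : List (Fin n)} {w : List (Fin n ⊕ Fin n)}
    (h : run (σ ++ b) w ≠ none) : run σ w ≠ none := by
  induction w generalizing σ b with
  | nil => simp
  | cons a w ih =>
    rcases a with i | i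
    · simpa using ih (σ := i :: σ) (by simpa using h)
    rcases σ with _ | ⟨j, σ⟩
    · rcases b with _ | ⟨k, b⟩
      · exact h
      by_cases hik : i = k
      · subst hik
        simpa using ih (σ := []) (b := b) (by simpa using h)
      · simp [hik] at h
    · by_cases hij : i = j
      · subst hij
        simpa using ih (b := b) (by simpa using h)
      · simp [hij] at h

lemma run_ne_none_of_infix {u w : List (Fin n ⊕ Fin n)} (huw : u <:+: w)
    (h : run [] w ≠ none) : run [] u ≠ none := by
  obtain ⟨a, b, rfl⟩ := huw
  rw [run_append, run_append] at h
  obtain ⟨σ, hσ⟩ := Option.ne_none_iff_exists'.1 h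
  obtain ⟨τ, hτ, -⟩ := Option.bind_eq_some_iff.1 hσ
  obtain ⟨ρ, hρ, hu⟩ := Option.bind_eq_some_iff.1 hτ
  exact run_ne_none_of_append_stack (σ := []) (b := ρ) (by simp [hu])

lemma step_eq_none_iff {s : List (Fin n)} {a : Fin n ⊕ Fin n} :
    step s a = none ↔ ∃ i j s', a = .inr i ∧ s = j :: s' ∧ j ≠ i := by
  rcases a with i | i
  · simp
  · rcases s with _ | ⟨j, s⟩
    · simp
    · by_cases hij : i = j <;> simp [hij, eq_comm]

lemma exists_of_run_eq_none {s : List (Fin n)} {w : List (Fin n ⊕ Fin n)} (h : run s w = none) :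
    ∃ u a v σ, w = u ++ a :: v ∧ run s u = some σ ∧ step σ a = none := by
  induction w generalizing s with
  | nil => simp at h
  | cons a w ih =>
    cases hs : step s a with
    | none => exact ⟨[], a, w, s, rfl, rfl, hs⟩
    | some s' =>
      obtain ⟨u, b, v, σ, rfl, hu, hb⟩ := ih (s := s') (by simpa [hs] using h)
      exact ⟨a :: u, b, v, σ, rfl, by simp [hs, hu], hb⟩

lemma exists_of_run_eq_cons {w : List (Fin n ⊕ Fin n)} {p : Fin n} {s : List (Fin n)}
    (h : run [] w = some (p :: s)) :
    ∃ u m, w = u ++ .inl p :: m ∧ ReducesToOne m ∧ run [] u = some s := by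
  induction hN : w.length using Nat.strong_induction_on generalizing w p s with
  | _ N ih =>
    subst hN
    rcases List.eq_nil_or_concat w with rfl | ⟨w, a, rfl⟩
    · simp at h
    rw [List.concat_eq_append, run_append] at h
    obtain ⟨σ, hσ, ha⟩ := Option.bind_eq_some_iff.1 h
    rcases a with i | i
    · obtain ⟨rfl, rfl⟩ : i = p ∧ σ = s := by simpa using ha
      exact ⟨w, [], by simp, .nil, hσ⟩
    · rcases σ with _ | ⟨j, σ⟩
      · simp at ha
      obtain ⟨rfl, rfl⟩ : i = j ∧ σ = p :: s := by simpa using ha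
      obtain ⟨u, m, rfl, hm, hu⟩ := ih _ (by simp) hσ rfl
      obtain ⟨u', m', rfl, hm', hu'⟩ := ih _ (by simp) hu rfl
      exact ⟨u', m' ++ .inl i :: (m ++ [.inr i]), by simp,
        .append _ _ hm' (.wrap i m hm), hu'⟩

lemma mismatch_iff_run_eq_none (w : List (Fin n ⊕ Fin n)) : Mismatch w ↔ run [] w = none := by
  constructor
  · rintro ⟨u, m, v, i, j, hij, hm, rfl⟩
    cases hu : run [] u with
    | none => simp [run_append, hu]
    | some s => simp [run_append, hu, run_of_reducesToOne hm, Ne.symm hij]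
  · intro h
    obtain ⟨w', a, v, σ, rfl, hσ, ha⟩ := exists_of_run_eq_none h
    obtain ⟨q, p, s, rfl, rfl, hpq⟩ := step_eq_none_iff.1 ha
    obtain ⟨u, m, rfl, hm, -⟩ := exists_of_run_eq_cons hσ
    exact ⟨u, m, v, p, q, hpq, hm, by simp⟩

lemma mem_iff_run (x : ℤ → Fin n ⊕ Fin n) :
    x ∈ Dyck n ↔ ∀ (i : ℤ) (k : ℕ), run [] (cfgWord x i k) ≠ none := by
  simp [Dyck, mismatch_iff_run_eq_none]

lemma mem_foll_iff {l r : ℕ → Fin n ⊕ Fin n} :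
    r ∈ foll (Dyck n) l ↔ ∀ Q k, run [] (leftWord l Q ++ rightWord r k) ≠ none := by
  change glue l r ∈ Dyck n ↔ _
  rw [mem_iff_run]
  refine ⟨fun h Q k => cfgWord_glue l r Q k ▸ h _ _, fun h i k => ?_⟩
  have hinfix := cfgWord_infix (glue l r) (i := i) (k := k) (j := -((-i).toNat : ℕ))
    (m := (-i).toNat + (i + k).toNat) (by omega) (by omega)
  exact run_ne_none_of_infix hinfix (cfgWord_glue l r _ _ ▸ h _ _)

lemma mem_foll_iff_add {l r : ℕ → Fin n ⊕ Fin n} (Q₀ k₀ : ℕ) :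
    r ∈ foll (Dyck n) l ↔ ∀ Q k, run [] (leftWord l (Q + Q₀) ++ rightWord r (k + k₀)) ≠ none := by
  rw [mem_foll_iff]
  refine ⟨fun h Q k => h _ _, fun h Q k => run_ne_none_of_infix ?_ (h Q k)⟩
  obtain ⟨u, hu⟩ := leftWord_suffix l Q Q₀
  obtain ⟨v, hv⟩ := rightWord_prefix r k k₀
  exact ⟨u, v, by rw [Nat.add_comm, ← hu, ← hv]; simp⟩

lemma mem_foll_extendRay {l r : ℕ → Fin n ⊕ Fin n} {a : Fin n ⊕ Fin n} :
    r ∈ foll (Dyck n) (extendRay l a) ↔ extendRay r a ∈ foll (Dyck n) l := by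
  rw [mem_foll_iff_add 1 0, mem_foll_iff_add 0 1]
  simp [leftWord_extendRay_succ, rightWord_extendRay_succ]

lemma run_leftWord_ne_none {l : ℕ → Fin n ⊕ Fin n} (hl : l ∈ LeftRays (Dyck n)) (Q : ℕ) :
    run [] (leftWord l Q) ≠ none := by
  obtain ⟨r, hr⟩ := mem_leftRays_iff.1 hl
  simpa using mem_foll_iff.1 hr Q 0

lemma foll_eq_of_run_leftWord_eq {l l' : ℕ → Fin n ⊕ Fin n} (K K' : ℕ)
    (h : ∀ Q, run [] (leftWord l (Q + K)) = run [] (leftWord l' (Q + K'))) :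
    foll (Dyck n) l = foll (Dyck n) l' := by
  ext r
  rw [mem_foll_iff_add (l := l) K 0, mem_foll_iff_add (l := l') K' 0]
  simp only [run_append, h]

def Accepts (s : List (Fin n)) (r : ℕ → Fin n ⊕ Fin n) : Prop :=
  ∀ k, run s (rightWord r k) ≠ none

lemma mem_foll_iff_accepts {l r : ℕ → Fin n ⊕ Fin n} :
    r ∈ foll (Dyck n) l ↔ ∀ Q, ∃ s, run [] (leftWord l Q) = some s ∧ Accepts s r := by
  rw [mem_foll_iff]
  refine forall_congr' fun Q => ?_
  cases h : run [] (leftWord l Q) <;> simp [run_append, h, Accepts]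

lemma accepts_extendRay {s : List (Fin n)} {r : ℕ → Fin n ⊕ Fin n} {a : Fin n ⊕ Fin n} :
    Accepts s (extendRay r a) ↔ ∃ s', step s a = some s' ∧ Accepts s' r := by
  constructor
  · intro h
    obtain ⟨s', hs'⟩ := Option.ne_none_iff_exists'.1 (by simpa [rightWord_extendRay_succ] using h 1)
    exact ⟨s', hs', fun k => by simpa [rightWord_extendRay_succ, hs'] using h (k + 1)⟩
  · rintro ⟨s', hs', h⟩ (_ | k)
    · simp
    · simpa [rightWord_extendRay_succ, hs'] using h k

lemma extendRay_inr_mem_foll_extendRay_inl_iff {l r : ℕ → Fin n ⊕ Fin n} {i j : Fin n} :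
    extendRay r (.inr j) ∈ foll (Dyck n) (extendRay l (.inl i)) ↔ i = j ∧ r ∈ foll (Dyck n) l := by
  have hacc : ∀ s, Accepts s (extendRay (extendRay r (.inr j)) (.inl i)) ↔ i = j ∧ Accepts s r :=
    fun s => by simp [accepts_extendRay, eq_comm]
  rw [mem_foll_extendRay, mem_foll_iff_accepts, mem_foll_iff_accepts]
  simp only [hacc]
  constructor
  · intro h
    obtain ⟨-, -, hij, -⟩ := h 0
    exact ⟨hij, fun Q => (h Q).imp fun _ ⟨hs, _, hr⟩ => ⟨hs, hr⟩⟩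
  · rintro ⟨hij, h⟩ Q
    exact (h Q).imp fun _ ⟨hs, hr⟩ => ⟨hs, hij, hr⟩

lemma run_leftWord_extendRay_succ (l : ℕ → Fin n ⊕ Fin n) (a : Fin n ⊕ Fin n) (Q : ℕ) :
    run [] (leftWord (extendRay l a) (Q + 1)) = (run [] (leftWord l Q)).bind (step · a) := by
  rw [leftWord_extendRay_succ, run_append]
  cases run [] (leftWord l Q) <;> simp

/-- A letter on top of a stack of `l` was pushed by a left bracket of `l` that is unmatched
further right; cutting `l` just before that bracket leaves a ray `l'` whose stacks are the
stacks of `l` with the letter removed. -/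
lemma exists_run_leftWord_eq_map {l : ℕ → Fin n ⊕ Fin n} {K : ℕ} {p : Fin n} {s : List (Fin n)}
    (h : run [] (leftWord l K) = some (p :: s)) :
    ∃ (l' : ℕ → Fin n ⊕ Fin n) (K' : ℕ),
      ∀ Q, run [] (leftWord l (Q + K)) = (run [] (leftWord l' (Q + K'))).map (p :: ·) := by
  obtain ⟨u, m, hw, hm, -⟩ := exists_of_run_eq_cons h
  have hK : K = u.length + (m.length + 1) := by simpa using congrArg List.length hw
  have htail : leftWord l (m.length + 1) = .inl p :: m := by
    rw [hK, leftWord_add] at hw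
    exact List.append_inj_right' hw (by simp)
  refine ⟨fun i => l (i + (m.length + 1)), u.length, fun Q => ?_⟩
  rw [hK, ← add_assoc, leftWord_add, htail, run_append]
  cases run [] (leftWord _ (Q + u.length)) <;> simp [run_of_reducesToOne hm]

lemma KEdge.inl_unique {u u' w : Set (ℕ → Fin n ⊕ Fin n)} {i i' : Fin n}
    (he : KEdge (Dyck n) u (.inl i) w) (he' : KEdge (Dyck n) u' (.inl i') w) :
    i = i' ∧ u = u' := by
  obtain ⟨l, hl, -, rfl, rfl⟩ := he
  obtain ⟨l', -, -, rfl, hw⟩ := he'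
  have hmem : ∀ r, extendRay r (.inr i) ∈ foll (Dyck n) (extendRay l' (.inl i')) ↔
      r ∈ foll (Dyck n) l := fun r => by
    rw [← hw, extendRay_inr_mem_foll_extendRay_inl_iff, and_iff_right rfl]
  obtain ⟨r, hr⟩ := mem_leftRays_iff.1 hl
  obtain ⟨rfl, -⟩ := extendRay_inr_mem_foll_extendRay_inl_iff.1 ((hmem r).2 hr)
  refine ⟨rfl, Set.ext fun r => ?_⟩
  rw [← hmem, extendRay_inr_mem_foll_extendRay_inl_iff, and_iff_right rfl]

lemma KEdge.inr_cases {u v : Set (ℕ → Fin n ⊕ Fin n)} {j : Fin n}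
    (he : KEdge (Dyck n) u (.inr j) v) : v = u ∨ KEdge (Dyck n) v (.inl j) u := by
  obtain ⟨l, hl, hlj, rfl, rfl⟩ := he
  by_cases hempty : ∀ Q, run [] (leftWord l Q) = some []
  · refine .inl (foll_eq_of_run_leftWord_eq 1 0 fun Q => ?_)
    simp [run_leftWord_extendRay_succ, hempty]
  obtain ⟨K, hK⟩ := not_forall.1 hempty
  obtain ⟨s, hs⟩ := Option.ne_none_iff_exists'.1 (run_leftWord_ne_none hl K)
  obtain ⟨p, s, rfl⟩ := List.exists_cons_of_ne_nil (l := s) (by rintro rfl; exact hK hs)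
  obtain rfl : j = p := by
    by_contra hjp
    exact run_leftWord_ne_none hlj (K + 1) (by simp [run_leftWord_extendRay_succ, hs, hjp])
  obtain ⟨l', K', hstack⟩ := exists_run_leftWord_eq_map hs
  have hfoll : foll (Dyck n) l = foll (Dyck n) (extendRay l' (.inl j)) :=
    foll_eq_of_run_leftWord_eq K (K' + 1) fun Q => by
      rw [hstack, ← add_assoc, run_leftWord_extendRay_succ]
      cases run [] (leftWord l' (Q + K')) <;> simp
  have hfoll' : foll (Dyck n) (extendRay l (.inr j)) = foll (Dyck n) l' :=
    foll_eq_of_run_leftWord_eq (K + 1) K' fun Q => by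
      rw [← add_assoc, run_leftWord_extendRay_succ, hstack]
      cases run [] (leftWord l' (Q + K')) <;> simp
  exact .inr ⟨l', mem_leftRays_iff.2 (hfoll' ▸ mem_leftRays_iff.1 hlj),
    mem_leftRays_iff.2 (hfoll ▸ mem_leftRays_iff.1 hl), hfoll', hfoll⟩

def StackBoundedBy (l : ℕ → Fin n ⊕ Fin n) (s : List (Fin n)) : Prop :=
  ∀ Q t, run [] (leftWord l Q) = some t → t <+: s

def closingRay (q : Fin n) : List (Fin n) → ℕ → Fin n ⊕ Fin n
  | [] => fun _ => .inr q
  | c :: s => extendRay (closingRay q s) (.inr c)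

lemma leftWord_const (a : Fin n ⊕ Fin n) (Q : ℕ) :
    leftWord (fun _ => a) Q = List.replicate Q a := by
  simp [leftWord, rightWord, List.ofFn_const]

lemma accepts_closingRay {q : Fin n} {s t : List (Fin n)} (h : t <+: s) :
    Accepts t (closingRay q s) := by
  induction s generalizing t with
  | nil =>
    obtain rfl := List.prefix_nil.1 h
    intro k
    simp [closingRay, rightWord, List.ofFn_const, run_replicate_inr]
  | cons c s ih =>
    rw [closingRay, accepts_extendRay]
    rcases List.prefix_cons_iff.1 h with rfl | ⟨t, rfl, ht⟩
    · exact ⟨[], rfl, ih List.nil_prefix⟩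
    · exact ⟨t, by simp, ih ht⟩

lemma exists_not_accepts_closingRay [Nontrivial (Fin n)] {s t : List (Fin n)} (h : ¬t <+: s) :
    ∃ q, ¬Accepts t (closingRay q s) := by
  obtain ⟨p, t, rfl⟩ := List.exists_cons_of_ne_nil (l := t) (by rintro rfl; exact h List.nil_prefix)
  induction s generalizing p t with
  | nil =>
    obtain ⟨q, hq⟩ := exists_ne p
    exact ⟨q, fun hacc => hacc 1 (by simp [closingRay, rightWord, hq])⟩
  | cons c s ih =>
    by_cases hpc : p = c
    · subst hpc
      obtain ⟨q, hq⟩ : ∃ q, ¬Accepts t (closingRay q s) := by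
        rcases t with _ | ⟨p', t⟩
        · exact absurd (List.cons_prefix_cons.2 ⟨rfl, List.nil_prefix⟩) h
        · exact ih p' t (fun h' => h (List.cons_prefix_cons.2 ⟨rfl, h'⟩))
      exact ⟨q, by simpa [closingRay, accepts_extendRay] using hq⟩
    · exact ⟨c, by simp [closingRay, accepts_extendRay, Ne.symm hpc]⟩

/-- A stack of `l` that is not a prefix of `s` is detected by a ray closing `s`, which then lies
in the follower set of `l'` but not in that of `l`. -/
lemma StackBoundedBy.of_foll_eq [Nontrivial (Fin n)] {l l' : ℕ → Fin n ⊕ Fin n}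
    {s : List (Fin n)} (hl' : l' ∈ LeftRays (Dyck n)) (h : foll (Dyck n) l = foll (Dyck n) l')
    (hb : StackBoundedBy l' s) : StackBoundedBy l s := by
  intro Q t ht
  by_contra hts
  obtain ⟨q, hq⟩ := exists_not_accepts_closingRay hts
  have hmem : closingRay q s ∈ foll (Dyck n) l' := mem_foll_iff_accepts.2 fun Q' => by
    obtain ⟨t', ht'⟩ := Option.ne_none_iff_exists'.1 (run_leftWord_ne_none hl' Q')
    exact ⟨t', ht', accepts_closingRay (hb Q' t' ht')⟩
  rw [← h, mem_foll_iff_accepts] at hmem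
  obtain ⟨t', ht', hacc⟩ := hmem Q
  obtain rfl : t = t' := Option.some_injective _ (ht.symm.trans ht')
  exact hq hacc

lemma StackBoundedBy.of_extendRay_inl {l : ℕ → Fin n ⊕ Fin n} {j : Fin n} {s : List (Fin n)}
    (hb : StackBoundedBy (extendRay l (.inl j)) s) : ∃ s', s = j :: s' ∧ StackBoundedBy l s' := by
  have hj := hb 1 [j] (by simp [run_leftWord_extendRay_succ])
  rcases s with _ | ⟨c, s⟩
  · simp at hj
  obtain ⟨rfl, -⟩ := List.cons_prefix_cons.1 hj
  refine ⟨s, rfl, fun Q t ht => ?_⟩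
  simpa using hb (Q + 1) (j :: t) (by simp [run_leftWord_extendRay_succ, ht])

lemma StackBoundedBy.of_extendRay {l : ℕ → Fin n ⊕ Fin n} {a : Fin n ⊕ Fin n}
    {s : List (Fin n)} (hla : extendRay l a ∈ LeftRays (Dyck n))
    (hb : StackBoundedBy (extendRay l a) s) : ∃ s', StackBoundedBy l s' := by
  rcases a with j | c
  · obtain ⟨s', -, h⟩ := hb.of_extendRay_inl
    exact ⟨s', h⟩
  refine ⟨c :: s, fun Q t ht => ?_⟩
  have hrun := run_leftWord_ne_none hla (Q + 1)
  rw [run_leftWord_extendRay_succ, ht] at hrun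
  rcases t with _ | ⟨p, t⟩
  · exact List.nil_prefix
  by_cases hcp : c = p
  · subst hcp
    exact List.cons_prefix_cons.2
      ⟨rfl, hb (Q + 1) t (by simp [run_leftWord_extendRay_succ, ht])⟩
  · simp [hcp] at hrun

/-- `v` is the follower set of a left ray whose unmatched left brackets spell a prefix of `s`,
read from the origin outwards. -/
def FollBoundedBy (v : Set (ℕ → Fin n ⊕ Fin n)) (s : List (Fin n)) : Prop :=
  ∃ l ∈ LeftRays (Dyck n), v = foll (Dyck n) l ∧ StackBoundedBy l s

lemma KEdge.exists_follBoundedBy [Nontrivial (Fin n)] {u v : Set (ℕ → Fin n ⊕ Fin n)}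
    {a : Fin n ⊕ Fin n} {s : List (Fin n)} (he : KEdge (Dyck n) u a v) (hv : FollBoundedBy v s) :
    ∃ s', FollBoundedBy u s' := by
  obtain ⟨l, hl, hla, rfl, rfl⟩ := he
  obtain ⟨l', hl', hfoll, hb⟩ := hv
  obtain ⟨s', hs'⟩ := (hb.of_foll_eq hl' hfoll).of_extendRay hla
  exact ⟨s', l, hl, rfl, hs'⟩

lemma KEdge.follBoundedBy_of_inl [Nontrivial (Fin n)] {u v : Set (ℕ → Fin n ⊕ Fin n)}
    {j : Fin n} {s : List (Fin n)} (he : KEdge (Dyck n) u (.inl j) v) (hv : FollBoundedBy v s) :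
    ∃ s', s = j :: s' ∧ FollBoundedBy u s' := by
  obtain ⟨l, hl, hla, rfl, rfl⟩ := he
  obtain ⟨l', hl', hfoll, hb⟩ := hv
  obtain ⟨s', rfl, hs'⟩ := (hb.of_foll_eq hl' hfoll).of_extendRay_inl
  exact ⟨s', rfl, l, hl, rfl, hs'⟩

lemma const_inr_mem (q : Fin n) : (fun _ => .inr q : ℤ → Fin n ⊕ Fin n) ∈ Dyck n := by
  rw [mem_iff_run]
  intro i k
  simp [cfgWord, List.ofFn_const, run_replicate_inr]

lemma follBoundedBy_follW_nil [Nonempty (Fin n)] : FollBoundedBy (follW (Dyck n) []) [] := by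
  obtain ⟨q⟩ := ‹Nonempty (Fin n)›
  refine ⟨fun _ => .inr q, ⟨_, const_inr_mem q, rfl⟩, ?_, ?_⟩
  · ext r
    rw [follW_nil]
    refine ⟨fun ⟨x, hx, hr⟩ => ?_, fun hr => ⟨_, hr, rightRay_glue _ r⟩⟩
    rw [← hr, mem_foll_iff]
    intro Q k
    simpa [leftWord_const, run_append, run_replicate_inr, rightWord_rightRay]
      using (mem_iff_run x).1 hx 0 k
  · intro Q t ht
    rw [leftWord_const, run_replicate_inr, Option.some_inj] at ht
    subst ht
    exact List.prefix_refl []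

lemma FVertex.exists_follBoundedBy [Nontrivial (Fin n)] {v : Set (ℕ → Fin n ⊕ Fin n)}
    (hv : FVertex (Dyck n) [] v) : ∃ s, FollBoundedBy v s := by
  obtain ⟨-, -, hreach⟩ := hv
  induction hreach using Relation.ReflTransGen.head_induction_on with
  | refl => exact ⟨[], follBoundedBy_follW_nil⟩
  | head hstep _ ih =>
    obtain ⟨a, he⟩ := hstep
    obtain ⟨s, hs⟩ := ih
    exact KEdge.exists_follBoundedBy he hs

lemma fischer_injOn_ter_inl :
    {e : FischerE (Dyck n) [] | ∃ i, e.1.2.1 = .inl i}.InjOn (FischerGraph (Dyck n) []).ter := by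
  rintro ⟨⟨u, a, w⟩, _, _, he⟩ ⟨i, rfl : a = _⟩ ⟨⟨u', a', w'⟩, _, _, he'⟩ ⟨i', rfl : a' = _⟩
    (rfl : w = w')
  obtain ⟨rfl, rfl⟩ := KEdge.inl_unique he he'
  rfl

section Path

variable {z : ℤ → FischerE (Dyck n) []} {i₀ : ℤ}

lemma exists_inl_label [Nontrivial (Fin n)] (hz : BiPath (FischerGraph (Dyck n) []) z)
    (hinj : ∀ i j, i₀ ≤ i → i < j → (z i).1.1 ≠ (z j).1.1) :
    ∃ t, i₀ ≤ t ∧ ∃ i, (z t).1.2.1 = .inl i := by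
  by_contra! hinr
  have hrev : ∀ t, i₀ ≤ t → ∃ j, KEdge (Dyck n) (z (t + 1)).1.1 (.inl j) (z t).1.1 := by
    intro t ht
    obtain ⟨j, hj⟩ : ∃ j, (z t).1.2.1 = .inr j := by
      cases h : (z t).1.2.1 with
      | inl i => exact absurd h (hinr t ht i)
      | inr j => exact ⟨j, rfl⟩
    have he := (z t).2.2.2
    rw [hj] at he
    rcases KEdge.inr_cases he with hloop | hrev
    · exact absurd ((hz t).symm.trans hloop).symm (hinj t (t + 1) ht (by omega))
    · have hzt : (z t).1.2.2 = (z (t + 1)).1.1 := hz t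
      exact ⟨j, hzt ▸ hrev⟩
  have hdesc : ∀ s t, i₀ ≤ t → ¬FollBoundedBy (z t).1.1 s := by
    intro s
    induction s with
    | nil =>
      intro t ht hb
      obtain ⟨j, he⟩ := hrev t ht
      obtain ⟨s', hs', -⟩ := KEdge.follBoundedBy_of_inl he hb
      exact List.cons_ne_nil _ _ hs'.symm
    | cons c s ih =>
      intro t ht hb
      obtain ⟨j, he⟩ := hrev t ht
      obtain ⟨s', hs', hb'⟩ := KEdge.follBoundedBy_of_inl he hb
      obtain ⟨-, rfl⟩ := List.cons.inj hs'
      exact ih (t + 1) (by omega) hb'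
  obtain ⟨s, hs⟩ := FVertex.exists_follBoundedBy (z i₀).2.1
  exact hdesc s i₀ le_rfl hs

/-- A `β`-edge after an `α`-edge either is a self-loop or returns to where the `α`-edge
started; both repeat a vertex. -/
lemma inl_label_succ (hz : BiPath (FischerGraph (Dyck n) []) z)
    (hinj : ∀ i j, i₀ ≤ i → i < j → (z i).1.1 ≠ (z j).1.1) {t : ℤ} (ht : i₀ ≤ t) {i : Fin n}
    (hi : (z t).1.2.1 = .inl i) : ∃ i', (z (t + 1)).1.2.1 = .inl i' := by
  cases h : (z (t + 1)).1.2.1 with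
  | inl i' => exact ⟨i', rfl⟩
  | inr j =>
    have he := (z t).2.2.2
    have he' := (z (t + 1)).2.2.2
    rw [hi] at he
    rw [h] at he'
    rcases KEdge.inr_cases he' with hloop | hrev
    · exact absurd ((hz (t + 1)).symm.trans hloop).symm
        (hinj (t + 1) (t + 1 + 1) (by omega) (by omega))
    · have hzt : (z t).1.2.2 = (z (t + 1)).1.1 := hz t
      obtain ⟨-, hu⟩ := KEdge.inl_unique he (hzt ▸ hrev)
      exact absurd (hu.trans (hz (t + 1))) (hinj t (t + 1 + 1) ht (by omega))

lemma eventually_inl_label [Nontrivial (Fin n)] (hz : BiPath (FischerGraph (Dyck n) []) z)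
    (hg : EvGeodesic (FischerGraph (Dyck n) []) z) :
    ∃ T, ∀ t, T ≤ t → ∃ i, (z t).1.2.1 = .inl i := by
  obtain ⟨i₀, hinj⟩ := hg.exists_ini_injective
  obtain ⟨T, hT, hTinl⟩ := exists_inl_label hz hinj
  refine ⟨T, fun t ht => ?_⟩
  induction t, ht using Int.leInduction with
  | base => exact hTinl
  | succ t ht ih =>
    obtain ⟨_, hi⟩ := ih
    exact inl_label_succ hz hinj (hT.trans ht) hi

end Path

end Dyck

theorem stmt13 (n : ℕ) (hn : 1 < n) :
    ¬ HasEvGeoProxPair (FischerGraph (Dyck n) []) := by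
  have : Nontrivial (Fin n) := Fin.nontrivial_iff_two_le.2 hn
  rintro ⟨x, y, hx, hy, hgx, hgy, hxy⟩
  obtain ⟨Tx, hTx⟩ := Dyck.eventually_inl_label hx hgx
  obtain ⟨Ty, hTy⟩ := Dyck.eventually_inl_label hy hgy
  exact not_strictProxPair_of_injOn_ter Dyck.fischer_injOn_ter_inl hx hy (T := max Tx Ty)
    (fun t ht => hTx t (le_of_max_le_left ht)) (fun t ht => hTy t (le_of_max_le_right ht)) hxy

end Paper
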